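/- Let ε ∈ (0,1), let n, d be positive integers, and let X = (x^1,…,x^n) be a sequence in [0,1)^d. Let x* ∈ [0,1]^d satisfy δ(x*) = sup_{x∈[0,1]^d} δ(x) and assume V_{x*} ≥ ε. Let ε' ∈ (0,1) and let R be a positive integer with R ≥ |ln(ε')| · |ln(1 − ε^d/d!)|^{−1}. If r^1,…,r^R ∈ [0,1]^d are sampled independently with respect to the Lebesgue measure λ^d and δ^R := max_{i=1,…,R} δ(r^i), then δ(x*) − δ^R ≤ ε holds with probability at least 1 − ε'. -/

import Mathlib

open Finset MeasureTheory

noncomputable def starVol {d : ℕ} (y : Fin d → ℝ) : ℝ := ∏ j, y j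

noncomputable def countOpen {n d : ℕ} (X : Fin n → Fin d → ℝ) (y : Fin d → ℝ) : ℕ :=
  (Finset.univ.filter fun i => ∀ j, X i j < y j).card

/-- δ(y) = V_y - A(y,X)/n -/
noncomputable def delta {n d : ℕ} (X : Fin n → Fin d → ℝ) (y : Fin d → ℝ) : ℝ :=
  starVol y - (countOpen X y : ℝ) / n

/-! The corner simplex `S = {y ≤ x* : ∑ⱼ (x*ⱼ - yⱼ) ≤ ε}` lies in `[0,1]^d` because
`x*ⱼ ≥ V_{x*} ≥ ε`, and every `y ∈ S` satisfies `δ(x*) - δ(y) ≤ ∑ⱼ (x*ⱼ - yⱼ) ≤ ε`: the count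
`A(·, X)` is monotone and `∏ x*ⱼ - ∏ yⱼ ≤ ∑ (x*ⱼ - yⱼ)` for coordinates in `[0,1]`.
The `2^d` sign flips of `S - x*` cover the ℓ¹-ball of radius `ε`, of volume `(2ε)^d / d!`,
so `λ^d(S) ≥ ε^d / d!`. Hence all `R` samples miss `S` with probability at most
`(1 - ε^d / d!)^R ≤ ε'`. -/

open scoped ENNReal

lemma Finset.prod_sub_prod_le_sum_sub {ι : Type*} (s : Finset ι) {f g : ι → ℝ}
    (hg : ∀ j ∈ s, 0 ≤ g j) (hgf : ∀ j ∈ s, g j ≤ f j) (hf : ∀ j ∈ s, f j ≤ 1) :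
    ∏ j ∈ s, f j - ∏ j ∈ s, g j ≤ ∑ j ∈ s, (f j - g j) := by
  classical
  induction s using Finset.induction_on with
  | empty => simp
  | @insert a s ha ih =>
    simp only [Finset.forall_mem_insert] at hg hgf hf
    rw [prod_insert ha, prod_insert ha, sum_insert ha]
    have hprod : ∏ j ∈ s, g j ≤ ∏ j ∈ s, f j := prod_le_prod hg.2 hgf.2
    have hg_prod : 0 ≤ ∏ j ∈ s, g j := prod_nonneg hg.2
    have hg_prod' : ∏ j ∈ s, g j ≤ 1 :=
      prod_le_one hg.2 fun j hj => (hgf.2 j hj).trans (hf.2 j hj)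
    -- `f a P - g a Q = f a (P - Q) + (f a - g a) Q` with `f a, Q ≤ 1`
    nlinarith [ih hg.2 hgf.2 hf.2]

lemma pow_le_of_abs_log_mul_inv_le {a ε : ℝ} (ha₀ : 0 < a) (ha₁ : a < 1) (hε : 0 < ε)
    {R : ℕ} (hR : |Real.log ε| * |Real.log a|⁻¹ ≤ R) : a ^ R ≤ ε := by
  have hlog : Real.log a < 0 := Real.log_neg ha₀ ha₁
  rw [abs_of_neg hlog, ← div_eq_mul_inv, div_le_iff₀ (neg_pos.2 hlog)] at hR
  rw [← Real.log_le_log_iff (pow_pos ha₀ R) hε, Real.log_pow]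
  linarith [neg_abs_le (Real.log ε)]

def cornerSimplex (ι : Type*) [Fintype ι] (c : ℝ) : Set (ι → ℝ) :=
  {t | (∀ j, 0 ≤ t j) ∧ ∑ j, t j ≤ c}

section CornerSimplex

variable {ι : Type*} [Fintype ι]

lemma measurableSet_cornerSimplex (c : ℝ) : MeasurableSet (cornerSimplex ι c) := by
  simp only [cornerSimplex, Set.ofPred_and, Set.ofPred_forall]
  exact (MeasurableSet.iInter fun j =>
    measurableSet_le measurable_const (measurable_pi_apply j)).inter
      (measurableSet_le (by fun_prop) measurable_const)

def signFlip (e : ι → Bool) (x : ι → ℝ) : ι → ℝ := fun j => if e j then -x j else x j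

lemma measurePreserving_signFlip (e : ι → Bool) : MeasurePreserving (signFlip e) := by
  refine volume_preserving_pi (f := fun j t => if e j then -t else t) fun j => ?_
  cases e j
  · exact MeasurePreserving.id volume
  · exact Measure.measurePreserving_neg volume

lemma setOf_sum_abs_le_subset_iUnion (c : ℝ) :
    {x : ι → ℝ | ∑ j, |x j| ≤ c} ⊆ ⋃ e, signFlip e ⁻¹' cornerSimplex ι c := by
  intro x hx
  have habs : signFlip (fun j => decide (x j < 0)) x = fun j => |x j| := by
    ext j
    by_cases h : x j < 0 <;> simp [signFlip, h, abs_of_neg, abs_of_nonneg, not_lt.1]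
  exact Set.mem_iUnion.2 ⟨fun j => decide (x j < 0), by simpa [cornerSimplex, habs] using hx⟩

lemma volume_setOf_sum_abs_le [Nonempty ι] (c : ℝ) :
    volume {x : ι → ℝ | ∑ j, |x j| ≤ c} =
      ENNReal.ofReal c ^ Fintype.card ι *
        ENNReal.ofReal (2 ^ Fintype.card ι / (Fintype.card ι).factorial) := by
  have h := volume_sum_rpow_le (ι := ι) le_rfl c
  simp only [Real.rpow_one, div_one, ne_eq, one_ne_zero, not_false_eq_true, div_self] at h
  rw [h, one_add_one_eq_two, Real.Gamma_two, mul_one, Real.Gamma_nat_eq_factorial]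

lemma ofReal_le_volume_cornerSimplex [Nonempty ι] {c : ℝ} (hc : 0 ≤ c) :
    ENNReal.ofReal (c ^ Fintype.card ι / (Fintype.card ι).factorial) ≤
      volume (cornerSimplex ι c) := by
  classical
  have hcover : volume {x : ι → ℝ | ∑ j, |x j| ≤ c} ≤
      2 ^ Fintype.card ι * volume (cornerSimplex ι c) :=
    calc volume {x : ι → ℝ | ∑ j, |x j| ≤ c}
        ≤ ∑ e : ι → Bool, volume (signFlip e ⁻¹' cornerSimplex ι c) :=
          (measure_mono (setOf_sum_abs_le_subset_iUnion c)).trans (measure_iUnion_fintype_le _ _)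
      _ = 2 ^ Fintype.card ι * volume (cornerSimplex ι c) := by
          simp [(measurePreserving_signFlip _).measure_preimage
            (measurableSet_cornerSimplex c).nullMeasurableSet]
  rw [volume_setOf_sum_abs_le, ← ENNReal.ofReal_pow hc,
    ← ENNReal.ofReal_mul (by positivity)] at hcover
  rw [← ENNReal.mul_le_mul_iff_right (a := 2 ^ Fintype.card ι) (by simp) (by simp)]
  convert hcover using 1
  rw [← ENNReal.ofReal_ofNat, ← ENNReal.ofReal_pow zero_le_two,
    ← ENNReal.ofReal_mul (by positivity)]
  ring_nf

end CornerSimplex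

section Discrepancy

variable {n d : ℕ}

lemma starVol_le_apply {x : Fin d → ℝ} (hx : ∀ j, x j ∈ Set.Icc (0 : ℝ) 1) (j : Fin d) :
    starVol x ≤ x j := by
  simpa [starVol] using prod_le_prod_of_subset_of_le_one (subset_univ {j}) (fun k _ => (hx k).1)
    fun k _ _ => (hx k).2

lemma countOpen_mono (X : Fin n → Fin d → ℝ) {x y : Fin d → ℝ} (hyx : y ≤ x) :
    countOpen X y ≤ countOpen X x :=
  card_le_card <| monotone_filter_right _ fun _ _ hi j => (hi j).trans_le (hyx j)

lemma delta_sub_delta_le_sum_sub (X : Fin n → Fin d → ℝ) {x y : Fin d → ℝ}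
    (hy : ∀ j, 0 ≤ y j) (hyx : y ≤ x) (hx : ∀ j, x j ≤ 1) :
    delta X x - delta X y ≤ ∑ j, (x j - y j) := by
  have hvol : starVol x - starVol y ≤ ∑ j, (x j - y j) :=
    prod_sub_prod_le_sum_sub univ (fun j _ => hy j) (fun j _ => hyx j) fun j _ => hx j
  have hcount : (countOpen X y : ℝ) / n ≤ countOpen X x / n := by
    gcongr
    exact countOpen_mono X hyx
  rw [delta, delta]
  linarith

lemma sub_preimage_cornerSimplex_subset_Icc {x : Fin d → ℝ} {ε : ℝ}
    (hx : ∀ j, x j ∈ Set.Icc (0 : ℝ) 1) (hε : ε ≤ starVol x) :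
    (x - ·) ⁻¹' cornerSimplex (Fin d) ε ⊆ Set.Icc 0 1 := by
  rintro y ⟨hyx, hsum⟩
  simp only [Pi.sub_apply, sub_nonneg] at hyx hsum
  refine ⟨fun j => ?_, fun j => (hyx j).trans (hx j).2⟩
  rw [Pi.zero_apply]
  have := single_le_sum (fun k _ => sub_nonneg.2 (hyx k)) (mem_univ j)
  linarith [starVol_le_apply hx j]

lemma delta_sub_delta_le_of_sub_mem_cornerSimplex (X : Fin n → Fin d → ℝ)
    {x y : Fin d → ℝ} {ε : ℝ} (hx : ∀ j, x j ∈ Set.Icc (0 : ℝ) 1) (hε : ε ≤ starVol x)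
    (hy : x - y ∈ cornerSimplex (Fin d) ε) : delta X x - delta X y ≤ ε := by
  have hy₀ := (sub_preimage_cornerSimplex_subset_Icc hx hε hy).1
  exact (delta_sub_delta_le_sum_sub X hy₀ (fun j => sub_nonneg.1 (hy.1 j))
    fun j => (hx j).2).trans (by simpa using hy.2)

lemma ofReal_le_volume_restrict_Icc_sub_preimage_cornerSimplex (hd : 0 < d)
    {x : Fin d → ℝ} {ε : ℝ} (hx : ∀ j, x j ∈ Set.Icc (0 : ℝ) 1) (hε₀ : 0 ≤ ε)
    (hε : ε ≤ starVol x) :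
    ENNReal.ofReal (ε ^ d / d.factorial) ≤
      volume.restrict (Set.Icc 0 1) ((x - ·) ⁻¹' cornerSimplex (Fin d) ε) := by
  have : Nonempty (Fin d) := ⟨⟨0, hd⟩⟩
  rw [Measure.restrict_eq_self _ (sub_preimage_cornerSimplex_subset_Icc hx hε),
    (Measure.measurePreserving_sub_left volume x).measure_preimage
      (measurableSet_cornerSimplex ε).nullMeasurableSet]
  simpa using ofReal_le_volume_cornerSimplex (ι := Fin d) hε₀

end Discrepancy

lemma MeasureTheory.Measure.pi_setOf_exists_mem {α ι : Type*} [MeasurableSpace α] [Fintype ι]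
    (ν : Measure α) [IsProbabilityMeasure ν] {G : Set α} (hG : MeasurableSet G) :
    Measure.pi (fun _ : ι => ν) {r | ∃ i, r i ∈ G} = 1 - (1 - ν G) ^ Fintype.card ι := by
  have hcompl : {r : ι → α | ∃ i, r i ∈ G} = (Set.univ.pi fun _ => Gᶜ)ᶜ := by
    ext r; simp
  rw [hcompl, prob_compl_eq_one_sub (MeasurableSet.univ_pi fun _ => hG.compl), Measure.pi_pi,
    prod_const, card_univ, prob_compl_eq_one_sub hG]

lemma ENNReal.ofReal_one_sub_le_one_sub_one_sub_pow {p : ℝ≥0∞} {q ε : ℝ} {R : ℕ}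
    (hq₀ : 0 ≤ q) (hq₁ : q ≤ 1) (hqp : ENNReal.ofReal q ≤ p) (hε : 0 ≤ ε)
    (h : (1 - q) ^ R ≤ ε) : ENNReal.ofReal (1 - ε) ≤ 1 - (1 - p) ^ R :=
  calc ENNReal.ofReal (1 - ε) = 1 - ENNReal.ofReal ε := by
        rw [ENNReal.ofReal_sub _ hε, ENNReal.ofReal_one]
    _ ≤ 1 - ENNReal.ofReal (1 - q) ^ R := by
        rw [← ENNReal.ofReal_pow (by linarith)]
        gcongr
    _ ≤ 1 - (1 - p) ^ R := by
        rw [ENNReal.ofReal_sub _ hq₀, ENNReal.ofReal_one]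
        gcongr

theorem stmt10_general (n d : ℕ) (hd : 0 < d) (ε : ℝ) (hε : ε ∈ Set.Ioo (0 : ℝ) 1)
    (X : Fin n → Fin d → ℝ)
    (xs : Fin d → ℝ) (hxs : ∀ j, xs j ∈ Set.Icc (0 : ℝ) 1)
    (hV : ε ≤ starVol xs)
    (ε' : ℝ) (hε' : ε' ∈ Set.Ioo (0 : ℝ) 1)
    (R : ℕ) (hRpos : 0 < R)
    (hR : |Real.log ε'| * |Real.log (1 - ε ^ d / (d.factorial : ℝ))|⁻¹ ≤ (R : ℝ)) :
    ENNReal.ofReal (1 - ε') ≤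
      (volume.restrict (Set.univ.pi fun _ : Fin R => Set.Icc (0 : Fin d → ℝ) 1))
        {r : Fin R → Fin d → ℝ |
          delta X xs -
            Finset.univ.sup' ⟨⟨0, hRpos⟩, Finset.mem_univ _⟩ (fun i => delta X (r i)) ≤ ε} := by
  have : IsProbabilityMeasure (volume.restrict (Set.Icc (0 : Fin d → ℝ) 1)) :=
    ⟨by simp [Real.volume_Icc_pi]⟩
  have hq₀ : 0 < ε ^ d / d.factorial := by have := hε.1; positivity
  have hq₁ : ε ^ d / d.factorial < 1 :=
    (div_le_self (pow_nonneg hε.1.le d) (Nat.one_le_cast.2 d.factorial_pos)).trans_lt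
      (pow_lt_one₀ hε.1.le hε.2 hd.ne')
  set S := (xs - ·) ⁻¹' cornerSimplex (Fin d) ε
  have hsub : {r : Fin R → Fin d → ℝ | ∃ i, r i ∈ S} ⊆
      {r | delta X xs - univ.sup' ⟨⟨0, hRpos⟩, mem_univ _⟩ (fun i => delta X (r i)) ≤ ε} := by
    rintro r ⟨i, hi⟩
    exact (sub_le_sub_left (le_sup' (fun i => delta X (r i)) (mem_univ i)) _).trans
      (delta_sub_delta_le_of_sub_mem_cornerSimplex X hxs hV hi)
  rw [volume_pi, Measure.restrict_pi_pi]
  refine le_trans ?_ (measure_mono hsub)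
  rw [Measure.pi_setOf_exists_mem _ (measurableSet_cornerSimplex ε |>.preimage (by fun_prop)),
    Fintype.card_fin]
  exact ENNReal.ofReal_one_sub_le_one_sub_one_sub_pow hq₀.le hq₁.le
    (ofReal_le_volume_restrict_Icc_sub_preimage_cornerSimplex hd hxs hε.1.le hV) hε'.1.le
    (pow_le_of_abs_log_mul_inv_le (by linarith) (by linarith) hε'.1 hR)

/-- If `x*` maximizes δ over `[0,1]^d`, `V_{x*} ≥ ε`, and
`R ≥ |ln ε'|·|ln(1 - ε^d/d!)|⁻¹`, then for `R` points sampled independently and uniformly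
from `[0,1]^d` (i.e. with respect to the product of `R` copies of Lebesgue measure on the
cube), the maximum `δ^R` of their δ-values satisfies `δ(x*) - δ^R ≤ ε` with probability
at least `1 - ε'`. -/
theorem stmt10 (n d : ℕ) (hn : 0 < n) (hd : 0 < d) (ε : ℝ) (hε : ε ∈ Set.Ioo (0 : ℝ) 1)
    (X : Fin n → Fin d → ℝ) (hX : ∀ i j, X i j ∈ Set.Ico (0 : ℝ) 1)
    (xs : Fin d → ℝ) (hxs : ∀ j, xs j ∈ Set.Icc (0 : ℝ) 1)
    (hmax : ∀ x : Fin d → ℝ, (∀ j, x j ∈ Set.Icc (0 : ℝ) 1) → delta X x ≤ delta X xs)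
    (hV : ε ≤ starVol xs)
    (ε' : ℝ) (hε' : ε' ∈ Set.Ioo (0 : ℝ) 1)
    (R : ℕ) (hRpos : 0 < R)
    (hR : |Real.log ε'| * |Real.log (1 - ε ^ d / (d.factorial : ℝ))|⁻¹ ≤ (R : ℝ)) :
    ENNReal.ofReal (1 - ε') ≤
      (volume.restrict (Set.univ.pi fun _ : Fin R => Set.Icc (0 : Fin d → ℝ) 1))
        {r : Fin R → Fin d → ℝ |
          delta X xs -
            Finset.univ.sup' ⟨⟨0, hRpos⟩, Finset.mem_univ _⟩ (fun i => delta X (r i)) ≤ ε} :=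
  stmt10_general n d hd ε hε X xs hxs hV ε' hε' R hRpos hR
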